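/- arXiv:0809.1376 — 3 statements merged into one kernel-verified Lean document; each statement's English description precedes it below -/
import Mathlib

section
/- Let A be a Frobenius algebra over a field with Nakayama automorphism ν. Then for every algebra automorphism g of A and every finite-dimensional left A-module M, the twisted modules M_{νg} and M_{gν} are isomorphic (where M_α denotes M with action b·m = α(b)m). -/
/-- Let `A` be a finite-dimensional Frobenius algebra over a field `F`, i.e. `A` carries a
non-degenerate associative bilinear form `B`, with Nakayama automorphism `ν` (characterised by
`B a b = B (ν b) a`).  Then for every algebra automorphism `g` of `A` and every
finite-dimensional left `A`-module `M`, the twisted modules `M_{νg}` and `M_{gν}` are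
isomorphic; i.e. there is an additive bijection `e : M ≃+ M` intertwining the two twisted
actions: `e ((ν (g b)) • m) = (g (ν b)) • e m`. -/
theorem stmt_0 (F : Type*) [Field F] (A : Type*) [Ring A] [Algebra F A]
    [FiniteDimensional F A]
    (B : A →ₗ[F] A →ₗ[F] F)
    (hassoc : ∀ a b c : A, B (a * b) c = B a (b * c))
    (hnondeg_left : ∀ a : A, (∀ b : A, B a b = 0) → a = 0)
    (hnondeg_right : ∀ b : A, (∀ a : A, B a b = 0) → b = 0)
    (ν : A ≃ₐ[F] A) (hν : ∀ a b : A, B a b = B (ν b) a)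
    (g : A ≃ₐ[F] A)
    (M : Type*) [AddCommGroup M] [Module A M]
    [Module F M] [IsScalarTower F A M] [FiniteDimensional F M] :
    ∃ e : M ≃+ M, ∀ (b : A) (m : M), e (ν (g b) • m) = g (ν b) • e m := by
  classical
  -- nondegeneracy rephrased as cancellation
  have huniqR : ∀ x y : A, (∀ a : A, B a x = B a y) → x = y := by
    intro x y h
    have hx : x - y = 0 := hnondeg_right _ fun a => by simp [h a]
    exact sub_eq_zero.mp hx
  have huniqL : ∀ x y : A, (∀ a : A, B x a = B y a) → x = y := by
    intro x y h
    have hx : x - y = 0 := hnondeg_left _ fun a => by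
      simp [map_sub, h a]
    exact sub_eq_zero.mp hx
  -- the map `b ↦ B (·, b)` into the dual, a bijection by nondegeneracy
  set ι : A →ₗ[F] Module.Dual F A := B.flip with hιdef
  have hιinj : Function.Injective ι := by
    rw [← LinearMap.ker_eq_bot, LinearMap.ker_eq_bot']
    intro b hb
    exact hnondeg_right b fun a => by
      have := LinearMap.congr_fun hb a
      simpa [hιdef] using this
  have hιsurj : Function.Surjective ι :=
    (LinearMap.injective_iff_surjective_of_finrank_eq_finrank
      (Subspace.dual_finrank_eq (K := F) (V := A)).symm).mp hιinj
  -- `φ b` is characterised by `B a (φ b) = B (g a) (g b)` for all `a`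
  have hφex : ∀ b : A, ∃ c : A, ∀ a : A, B a c = B (g a) (g b) := by
    intro b
    obtain ⟨c, hc⟩ := hιsurj ((B.flip (g b)).comp g.toLinearMap)
    exact ⟨c, fun a => by
      have := LinearMap.congr_fun hc a
      simpa [hιdef] using this⟩
  choose φ hφ using hφex
  -- φ is a left `A`-module map: φ (b * c) = b * φ c
  have hφmul : ∀ b c : A, φ (b * c) = b * φ c := by
    intro b c
    refine huniqR _ _ fun a => ?_
    have h1 : B a (φ (b * c)) = B (g a) (g (b * c)) := hφ (b * c) a
    have h2 : B (a * b) (φ c) = B (g (a * b)) (g c) := hφ c (a * b)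
    rw [h1, map_mul, ← hassoc, ← map_mul g a b, ← h2, hassoc]
  set u : A := φ 1 with hu
  have hφu : ∀ b : A, φ b = b * u := fun b => by
    have := hφmul b 1; rwa [mul_one] at this
  -- φ is injective
  have hφinj : Function.Injective φ := by
    intro x y h
    have hg : g x = g y := huniqR _ _ fun a => by
      have h1 := hφ x (g.symm a)
      have h2 := hφ y (g.symm a)
      rw [g.apply_symm_apply] at h1 h2
      rw [← h1, ← h2, h]
    exact g.injective hg
  -- φ is surjective
  have hφsurj : Function.Surjective φ := by
    intro c
    obtain ⟨ψ, hψ⟩ := hιsurj ((ι c).comp g.symm.toLinearMap)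
    refine ⟨g.symm ψ, huniqR _ _ fun a => ?_⟩
    have h1 := hφ (g.symm ψ) a
    rw [g.apply_symm_apply] at h1
    have h2 := LinearMap.congr_fun hψ (g a)
    simp only [hιdef, LinearMap.flip_apply, LinearMap.coe_comp, Function.comp_apply,
      AlgEquiv.toLinearMap_apply, g.symm_apply_apply] at h2
    rw [h1, h2]
  -- u is a unit: get left inverse v, then show it is two-sided
  obtain ⟨v, hv⟩ := hφsurj 1
  rw [hφu] at hv  -- hv : v * u = 1
  have hvu : v * u = 1 := hv
  have huv : u * v = 1 := by
    have h1 : φ (u * v) = φ 1 := by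
      rw [hφu, hφu, one_mul, mul_assoc, hvu, mul_one]
    have := hφinj h1
    exact this
  -- the key identity:  ν u * g⁻¹(ν (g b)) = ν b * ν u
  have hkey : ∀ b : A, ν u * g.symm (ν (g b)) = ν b * ν u := by
    intro b
    refine huniqL _ _ fun a => ?_
    set b' : A := g.symm (ν (g b)) with hb'
    calc B (ν u * b') a
        = B (ν u) (b' * a) := hassoc _ _ _
      _ = B (b' * a) u := (hν (b' * a) u).symm
      _ = B b' (a * u) := hassoc _ _ _
      _ = B b' (φ a) := by rw [hφu a]
      _ = B (g b') (g a) := hφ a b'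
      _ = B (ν (g b)) (g a) := by rw [hb', g.apply_symm_apply]
      _ = B (g a) (g b) := (hν (g a) (g b)).symm
      _ = B a (φ b) := (hφ b a).symm
      _ = B a (b * u) := by rw [hφu b]
      _ = B (ν (b * u)) a := hν a (b * u)
      _ = B (ν b * ν u) a := by rw [map_mul]
  -- the intertwining unit
  set c : A := g (ν u) with hc
  set c' : A := g (ν v) with hc'
  have hcc' : c * c' = 1 := by
    rw [hc, hc', ← map_mul, ← map_mul, huv, map_one, map_one]
  have hc'c : c' * c = 1 := by
    rw [hc, hc', ← map_mul, ← map_mul, hvu, map_one, map_one]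
  refine ⟨{ toFun := fun m => c • m
            invFun := fun m => c' • m
            left_inv := fun m => by show c' • c • m = m; rw [smul_smul, hc'c, one_smul]
            right_inv := fun m => by show c • c' • m = m; rw [smul_smul, hcc', one_smul]
            map_add' := fun x y => smul_add c x y }, ?_⟩
  intro b m
  have hcomm : c * ν (g b) = g (ν b) * c := by
    have h1 : ν (g b) = g (g.symm (ν (g b))) := (g.apply_symm_apply _).symm
    rw [hc, h1, ← map_mul, hkey b, map_mul]
  show c • (ν (g b) • m) = g (ν b) • (c • m)
  rw [smul_smul, smul_smul, hcomm]
end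

section
/- Let Γ be a finite-dimensional algebra, G a finite abelian group with kG semisimple acting on Γ, R = Γ⋊kG. For every finite-dimensional R-module M, the induced module (M↓_Γ)↑^R = R ⊗_Γ M↓_Γ is isomorphic as an R-module to ⊕_{g∈G} M_g, where M_g is M twisted by the character χ_{g⁻¹}: (a⋊h)∗m = χ_{g⁻¹}(h)(a⋊h)m. -/
/-- Matrix with a two-sided inverse over `R` induces an additive equivalence of `G → M`. -/
lemma matEquiv_aux {R M G : Type} [Ring R] [AddCommGroup M] [Module R M]
    [Fintype G] [DecidableEq G]
    (T Tinv : G → G → R)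
    (h1 : ∀ g g', (∑ l : G, T g l * Tinv l g') = if g = g' then 1 else 0)
    (h2 : ∀ l l', (∑ g : G, Tinv l g * T g l') = if l = l' then 1 else 0) :
    ∃ E : (G → M) ≃+ (G → M), ∀ f g, E f g = ∑ l : G, T g l • f l := by
  refine ⟨{ toFun := fun f g => ∑ l : G, T g l • f l,
            invFun := fun f l => ∑ g : G, Tinv l g • f g,
            left_inv := ?_, right_inv := ?_,
            map_add' := ?_ }, fun f g => rfl⟩
  · intro f
    funext l
    simp only [Finset.smul_sum, smul_smul]
    rw [Finset.sum_comm]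
    have : ∀ l' : G, (∑ g : G, Tinv l g * T g l') • f l'
        = (if l = l' then (1:R) else 0) • f l' := by
      intro l'; rw [h2]
    calc (∑ l' : G, ∑ g : G, (Tinv l g * T g l') • f l')
        = ∑ l' : G, (∑ g : G, Tinv l g * T g l') • f l' := by
          simp [Finset.sum_smul]
      _ = ∑ l' : G, (if l = l' then (1:R) else 0) • f l' := by
          exact Finset.sum_congr rfl fun l' _ => this l'
      _ = f l := by simp
  · intro f
    funext g
    simp only [Finset.smul_sum, smul_smul]
    rw [Finset.sum_comm]
    calc (∑ g' : G, ∑ l : G, (T g l * Tinv l g') • f g')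
        = ∑ g' : G, (∑ l : G, T g l * Tinv l g') • f g' := by
          simp [Finset.sum_smul]
      _ = ∑ g' : G, (if g = g' then (1:R) else 0) • f g' := by
          exact Finset.sum_congr rfl fun g' _ => by rw [h1]
      _ = f g := by simp
  · intro f₁ f₂
    funext g
    simp [smul_add, Finset.sum_add_distrib]

/-- Let `Γ` be a finite-dimensional algebra, `G` a finite abelian group with
`kG` semisimple acting on `Γ`, `R = Γ⋊kG` the smash product (axiomatised via
`emb : Γ → G → R`), and `χ : G ≃* Ĝ` a fixed indexing of the irreducible characters of `G`.
For a finite-dimensional `R`-module `M`, the induced module `(M↓_Γ)↑^R = R ⊗_Γ M↓_Γ`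
(modelled on `G → M` via `ee`, with `ee (emb a h • x) g = act g⁻¹ a • ee x (h⁻¹g)`, the
`Γ`-action on `M↓_Γ` being through `j : Γ →+* R`, `j a = a⋊1`) is isomorphic as an
`R`-module to `⊕_{g∈G} M_g`, where `M_g` is `M` twisted by the character `χ_{g⁻¹}`:
`(a⋊h) ∗ m = χ_{g⁻¹}(h) · ((a⋊h) • m)`. -/
theorem stmt_14 (k : Type) [Field k] [IsAlgClosed k]
    (Γ : Type) [Ring Γ] [Algebra k Γ] [FiniteDimensional k Γ]
    (G : Type) [CommGroup G] [Fintype G] (hG : (Fintype.card G : k) ≠ 0)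
    (act : G →* (Γ ≃ₐ[k] Γ))
    (χ : G ≃* (G →* kˣ))
    (R : Type) [Ring R] [Algebra k R]
    (emb : Γ → G → R)
    (hadd : ∀ (a b : Γ) (g : G), emb (a + b) g = emb a g + emb b g)
    (hsmul : ∀ (c : k) (a : Γ) (g : G), emb (c • a) g = c • emb a g)
    (hmul : ∀ (a b : Γ) (g h : G), emb a g * emb b h = emb (a * act g b) (g * h))
    (hone : emb 1 1 = 1)
    (hspan : ∀ r : R, ∃ f : G → Γ, r = ∑ g : G, emb (f g) g)
    (hindep : ∀ f : G → Γ, (∑ g : G, emb (f g) g) = 0 → ∀ g, f g = 0)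
    (j : Γ →+* R) (hj : ∀ a : Γ, j a = emb a 1)
    (M : Type) [AddCommGroup M] [Module R M] [Module k M] [FiniteDimensional k M]
    -- `I` is the induced module `R ⊗_Γ (M↓_Γ)`, modelled on `G → M`
    (I : Type) [AddCommGroup I] [Module R I]
    (ee : I ≃+ (G → M))
    (hee : ∀ (a : Γ) (h : G) (x : I) (g : G),
      ee (emb a h • x) g = j (act g⁻¹ a) • ee x (h⁻¹ * g)) :
    ∃ eqv : I ≃+ (G → M),
      ∀ (a : Γ) (h : G) (x : I) (g : G),
        eqv (emb a h • x) g =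
          algebraMap k R ((χ g⁻¹ h : kˣ) : k) • (emb a h • eqv x g) := by
  classical
  -- separation of points by characters
  have hexp : ((Monoid.exponent G : k)) ≠ 0 := by
    obtain ⟨t, ht⟩ := Group.exponent_dvd_card (G := G)
    intro h
    apply hG
    rw [ht]
    push_cast
    rw [h, zero_mul]
  haveI : NeZero ((Monoid.exponent G : k)) := ⟨hexp⟩
  have hsep : ∀ m : G, m ≠ 1 → ∃ g : G, χ g m ≠ 1 := by
    intro m hm
    obtain ⟨φ, hφ⟩ := CommGroup.exists_apply_ne_one_of_hasEnoughRootsOfUnity G k hm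
    exact ⟨χ.symm φ, by simpa [χ.apply_symm_apply] using hφ⟩
  -- sum over G of a nontrivial "character-like" family vanishes
  have key : ∀ ρ : G →* kˣ, (∃ g₀ : G, ρ g₀ ≠ 1) →
      (∑ g : G, ((ρ g : kˣ) : k)) = 0 := by
    intro ρ ⟨g₀, hg₀⟩
    have h1 : ((ρ g₀ : kˣ) : k) * (∑ g : G, ((ρ g : kˣ) : k))
        = ∑ g : G, ((ρ g : kˣ) : k) := by
      rw [Finset.mul_sum]
      rw [← Equiv.sum_comp (Equiv.mulLeft g₀) (fun g => ((ρ g : kˣ) : k))]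
      refine Finset.sum_congr rfl fun g _ => ?_
      simp [map_mul]
    have h2 : (((ρ g₀ : kˣ) : k) - 1) * (∑ g : G, ((ρ g : kˣ) : k)) = 0 := by
      rw [sub_mul, one_mul, h1, sub_self]
    rcases mul_eq_zero.mp h2 with h | h
    · exact absurd (Units.ext (sub_eq_zero.mp h)) hg₀
    · exact h
  -- row sums
  have sum_row : ∀ m : G, (∑ l : G, ((χ m l : kˣ) : k))
      = if m = 1 then (Fintype.card G : k) else 0 := by
    intro m
    by_cases hm : m = 1
    · simp [hm]
    · rw [if_neg hm]
      refine key (χ m) ?_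
      have : χ m ≠ 1 := fun h => hm (χ.injective (by simpa using h))
      obtain ⟨l₀, hl₀⟩ := DFunLike.ne_iff.mp this
      exact ⟨l₀, hl₀⟩
  -- column sums
  have sum_col : ∀ m : G, (∑ g : G, ((χ g m : kˣ) : k))
      = if m = 1 then (Fintype.card G : k) else 0 := by
    intro m
    by_cases hm : m = 1
    · simp [hm]
    · rw [if_neg hm]
      refine key { toFun := fun g => χ g m,
                   map_one' := by simp,
                   map_mul' := fun g g' => by simp [map_mul] } ?_
      obtain ⟨g₀, hg₀⟩ := hsep m hm
      exact ⟨g₀, hg₀⟩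
  -- abbreviations
  set A : k →+* R := algebraMap k R with hA
  have hAA : ∀ (s t : k) (u v : R), (A s * u) * (A t * v) = A (s * t) * (u * v) := by
    intro s t u v
    rw [map_mul]
    calc A s * u * (A t * v) = A s * ((u * A t) * v) := by rw [mul_assoc, mul_assoc]
      _ = A s * ((A t * u) * v) := by rw [← Algebra.commutes t u]
      _ = A s * A t * (u * v) := by rw [mul_assoc, mul_assoc]
  have hm2 : ∀ l l' : G, emb 1 l * emb 1 l' = emb 1 (l * l') := by
    intro l l'
    rw [hmul]
    simp
  have hact : ∀ (l : G) (a : Γ), act l (act l⁻¹ a) = a := by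
    intro l a
    rw [← AlgEquiv.mul_apply, ← map_mul, mul_inv_cancel, map_one]
    rfl
  set c : G → G → k := fun g l => ((χ g⁻¹ l : kˣ) : k) with hc
  set d : G → G → k := fun g l => (((χ g⁻¹ l)⁻¹ : kˣ) : k) with hd
  set T : G → G → R := fun g l => A (c g l) * emb 1 l with hT
  set Tinv : G → G → R :=
    fun l g => A ((Fintype.card G : k)⁻¹ * d g l) * emb 1 l⁻¹ with hTinv
  -- the two matrix identities
  have h1 : ∀ g g', (∑ l : G, T g l * Tinv l g') = if g = g' then (1:R) else 0 := by
    intro g g'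
    have hcd : ∀ l : G, c g l * d g' l = ((χ (g⁻¹ * g') l : kˣ) : k) := by
      intro l
      have h2 : χ (g⁻¹ * g') l = χ g⁻¹ l * (χ g'⁻¹ l)⁻¹ := by
        rw [show g⁻¹ * g' = g⁻¹ * (g'⁻¹)⁻¹ by group, map_mul, map_inv]
        simp
      rw [hc, hd, h2]
      push_cast
      ring
    calc (∑ l : G, T g l * Tinv l g')
        = ∑ l : G, A ((Fintype.card G : k)⁻¹ * ((χ (g⁻¹ * g') l : kˣ) : k)) := by
          refine Finset.sum_congr rfl fun l _ => ?_
          rw [hT, hTinv, hAA, hm2, mul_inv_cancel, hone, mul_one]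
          congr 1
          rw [← hcd l]
          ring
      _ = A ((Fintype.card G : k)⁻¹ * ∑ l : G, ((χ (g⁻¹ * g') l : kˣ) : k)) := by
          rw [Finset.mul_sum, map_sum]
      _ = if g = g' then (1:R) else 0 := by
          rw [sum_row (g⁻¹ * g')]
          by_cases hgg : g = g'
          · rw [if_pos (by simp [hgg]), if_pos hgg, inv_mul_cancel₀ hG, map_one]
          · rw [if_neg (by simpa [inv_mul_eq_one] using hgg), if_neg hgg, mul_zero, map_zero]
  have h2 : ∀ l l', (∑ g : G, Tinv l g * T g l') = if l = l' then (1:R) else 0 := by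
    intro l l'
    have hdc : ∀ g : G, d g l * c g l' = ((χ g⁻¹ (l⁻¹ * l') : kˣ) : k) := by
      intro g
      have : χ g⁻¹ (l⁻¹ * l') = (χ g⁻¹ l)⁻¹ * χ g⁻¹ l' := by
        rw [map_mul, map_inv]
      rw [hc, hd, this]
      push_cast
      ring
    have hsum : (∑ g : G, ((χ g⁻¹ (l⁻¹ * l') : kˣ) : k))
        = if l⁻¹ * l' = 1 then (Fintype.card G : k) else 0 := by
      rw [← sum_col (l⁻¹ * l')]
      exact Fintype.sum_equiv (Equiv.inv G) _ _ fun g => rfl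
    calc (∑ g : G, Tinv l g * T g l')
        = ∑ g : G, A ((Fintype.card G : k)⁻¹ * ((χ g⁻¹ (l⁻¹ * l') : kˣ) : k))
            * emb 1 (l⁻¹ * l') := by
          refine Finset.sum_congr rfl fun g _ => ?_
          rw [hTinv, hT, hAA, hm2]
          congr 2
          rw [← hdc g]
          ring
      _ = A ((Fintype.card G : k)⁻¹ * ∑ g : G, ((χ g⁻¹ (l⁻¹ * l') : kˣ) : k))
            * emb 1 (l⁻¹ * l') := by
          rw [Finset.mul_sum, map_sum, Finset.sum_mul]
      _ = if l = l' then (1:R) else 0 := by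
          rw [hsum]
          by_cases hll : l = l'
          · rw [if_pos (by simp [hll]), if_pos hll, inv_mul_cancel₀ hG, map_one, one_mul,
              show l⁻¹ * l' = 1 by simp [hll], hone]
          · rw [if_neg (by simpa [inv_mul_eq_one] using hll), if_neg hll, mul_zero, map_zero,
              zero_mul]
  obtain ⟨E, hE⟩ := matEquiv_aux (M := M) T Tinv h1 h2
  refine ⟨ee.trans E, ?_⟩
  intro a h x g
  have hea : ∀ l : G, T g l * j (act l⁻¹ a) = A (c g l) * emb a l := by
    intro l
    rw [hT, hj, mul_assoc, hmul, hact, mul_one, one_mul]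
  have heb : ∀ l : G, A (c g h) * (emb a h * T g l) = A (c g (h * l)) * emb a (h * l) := by
    intro l
    simp only [hT]
    have e1 : emb a h * (A (c g l) * emb 1 l) = A (c g l) * emb a (h * l) := by
      calc emb a h * (A (c g l) * emb 1 l)
          = (A 1 * emb a h) * (A (c g l) * emb 1 l) := by rw [map_one, one_mul]
        _ = A (1 * c g l) * (emb a h * emb 1 l) := hAA _ _ _ _
        _ = A (c g l) * emb a (h * l) := by rw [one_mul, hmul]; simp
    rw [e1, ← mul_assoc, ← map_mul]
    congr 1
    rw [hc]
    push_cast [map_mul]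
    ring
  calc (ee.trans E) (emb a h • x) g
      = ∑ l : G, T g l • (j (act l⁻¹ a) • ee x (h⁻¹ * l)) := by
        rw [AddEquiv.trans_apply, hE]
        refine Finset.sum_congr rfl fun l _ => ?_
        rw [hee]
    _ = ∑ l : G, (A (c g l) * emb a l) • ee x (h⁻¹ * l) := by
        refine Finset.sum_congr rfl fun l _ => ?_
        rw [smul_smul, hea]
    _ = ∑ l : G, (A (c g (h * l)) * emb a (h * l)) • ee x l := by
        rw [← Equiv.sum_comp (Equiv.mulLeft h)
          (fun l => (A (c g l) * emb a l) • ee x (h⁻¹ * l))]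
        refine Finset.sum_congr rfl fun l _ => ?_
        simp only [Equiv.coe_mulLeft]
        rw [inv_mul_cancel_left]
    _ = ∑ l : G, (A (c g h) * (emb a h * T g l)) • ee x l := by
        refine Finset.sum_congr rfl fun l _ => ?_
        rw [heb]
    _ = A (c g h) • (emb a h • (ee.trans E) x g) := by
        rw [AddEquiv.trans_apply, hE, Finset.smul_sum, Finset.smul_sum]
        refine Finset.sum_congr rfl fun l _ => ?_
        rw [smul_smul, smul_smul, mul_assoc]
end

section
/- Let A be a finite-dimensional algebra over an algebraically closed field, V_i an indecomposable non-projective A-module with Auslander–Reiten sequence 0 → τ(V_j) → M_j → V_j → 0, and define X_j = [τ(V_j)] + [V_j] − [M_j] in the free abelian group G(A) on isomorphism classes of indecomposables, with bilinear form ([U],[W]) = dim_k Hom_A(U,W). Then ([V_i], X_j) = δ_{ij} for all indecomposable V_i, V_j. -/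
/-- A module is indecomposable if it is nonzero and admits no nontrivial direct sum
decomposition. -/
def Indec (R : Type) [Ring R] (M : Type) [AddCommGroup M] [Module R M] : Prop :=
  (¬ Subsingleton M) ∧ ∀ U V : Submodule R M, IsCompl U V → U = ⊥ ∨ V = ⊥

lemma aux_nilpotent (k : Type) [Field k] {A M : Type} [Ring A] [Algebra k A]
    [AddCommGroup M] [Module A M] [Module k M] [SMulCommClass A k M]
    [IsScalarTower k A M] [FiniteDimensional k M]
    (hM : Indec A M) (g : M →ₗ[A] M) (hg : ¬ Function.Bijective g) :
    IsNilpotent g := by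
  have hnt : Nontrivial M := not_subsingleton_iff_nontrivial.mp hM.1
  set n := Module.finrank k M with hn
  have hnpos : 0 < n := Module.finrank_pos
  set g' : Module.End k M := g.restrictScalars k with hg'
  have hcoe : ∀ (m : ℕ) (x : M), (g' ^ m) x = (g ^ m) x := by
    intro m x
    simp [Module.End.pow_apply, hg']
  have hker2 : ∀ x : M, (g ^ (2 * n)) x = 0 → (g ^ n) x = 0 := by
    intro x hx
    have h1 : LinearMap.ker (g' ^ (2 * n)) = LinearMap.ker (g' ^ n) := by
      rw [hn, Module.End.ker_pow_eq_ker_pow_finrank_of_le (by omega)]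
    have hx' : x ∈ LinearMap.ker (g' ^ (2 * n)) := by
      rw [LinearMap.mem_ker, hcoe]; exact hx
    rw [h1, LinearMap.mem_ker, hcoe] at hx'
    exact hx'
  have hdisj : ∀ x : M, (g ^ n) x = 0 → (∃ y, (g ^ n) y = x) → x = 0 := by
    rintro x hx ⟨y, rfl⟩
    apply hker2
    have h2 : (g ^ (2 * n)) y = (g ^ n) ((g ^ n) y) := by
      rw [two_mul, pow_add]; rfl
    rw [h2]; exact hx
  have hcompl : IsCompl (LinearMap.ker (g ^ n)) (LinearMap.range (g ^ n)) := by
    constructor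
    · rw [disjoint_iff, Submodule.eq_bot_iff]
      rintro x ⟨hx1, hx2⟩
      exact hdisj x hx1 hx2
    · rw [codisjoint_iff, Submodule.eq_top_iff']
      intro x
      have hrn := LinearMap.finrank_range_add_finrank_ker (g' ^ n)
      have hdisj' : Disjoint (LinearMap.ker (g' ^ n)) (LinearMap.range (g' ^ n)) := by
        rw [Submodule.disjoint_def]
        intro u hu1 hu2
        rw [LinearMap.mem_ker, hcoe] at hu1
        obtain ⟨y, hy⟩ := hu2
        rw [hcoe] at hy
        exact hdisj u hu1 ⟨y, hy⟩
      have hsup : LinearMap.ker (g' ^ n) ⊔ LinearMap.range (g' ^ n) = ⊤ := by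
        apply Submodule.eq_top_of_finrank_eq
        have h3 := Submodule.finrank_sup_add_finrank_inf_eq
          (LinearMap.ker (g' ^ n)) (LinearMap.range (g' ^ n))
        rw [hdisj'.eq_bot] at h3
        simp only [finrank_bot] at h3
        omega
      have hx : x ∈ LinearMap.ker (g' ^ n) ⊔ LinearMap.range (g' ^ n) := by
        rw [hsup]; trivial
      obtain ⟨u, hu, v, hv, rfl⟩ := Submodule.mem_sup.mp hx
      apply Submodule.add_mem_sup
      · rw [LinearMap.mem_ker]
        rw [LinearMap.mem_ker, hcoe] at hu
        exact hu
      · obtain ⟨y, hy⟩ := hv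
        rw [hcoe] at hy
        exact ⟨y, hy⟩
  rcases hM.2 _ _ hcompl with hk | hr
  · exfalso
    apply hg
    have hinj : Function.Injective g := by
      rw [← LinearMap.ker_eq_bot, Submodule.eq_bot_iff]
      intro x hx
      rw [LinearMap.mem_ker] at hx
      have hxn : (g ^ n) x = 0 := by
        obtain ⟨m, hm⟩ : ∃ m, n = m + 1 := ⟨n - 1, by omega⟩
        rw [hm, pow_succ, Module.End.mul_apply, hx, map_zero]
      have : x ∈ LinearMap.ker (g ^ n) := hxn
      rw [hk] at this
      simpa using this
    have hinj' : Function.Injective g' := hinj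
    have hsurj : Function.Surjective g' := LinearMap.injective_iff_surjective.mp hinj'
    exact ⟨hinj, hsurj⟩
  · refine ⟨n, ?_⟩
    ext x
    have : (g ^ n) x ∈ LinearMap.range (g ^ n) := LinearMap.mem_range_self _ x
    rw [hr] at this
    simpa using this

lemma aux_local (k : Type) [Field k] [IsAlgClosed k] {A M : Type} [Ring A] [Algebra k A]
    [AddCommGroup M] [Module A M] [Module k M] [SMulCommClass A k M]
    [IsScalarTower k A M] [FiniteDimensional k M]
    (hM : Indec A M) :
    ∃ N : Submodule k (M →ₗ[A] M),
      (∀ g : M →ₗ[A] M, g ∈ N ↔ ¬ Function.Bijective g) ∧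
      Module.finrank k (M →ₗ[A] M) = Module.finrank k N + 1 := by
  have hnt : Nontrivial M := not_subsingleton_iff_nontrivial.mp hM.1
  have hzero : ¬ Function.Bijective (0 : M →ₗ[A] M) := by
    intro hb
    obtain ⟨x, hx⟩ := exists_ne (0 : M)
    exact hx (hb.1 (by simp))
  have hadd : ∀ g h : M →ₗ[A] M, ¬ Function.Bijective g → ¬ Function.Bijective h →
      ¬ Function.Bijective (g + h) := by
    intro g h hgn hhn hb
    have hw : IsUnit (g + h : Module.End A M) := (Module.End.isUnit_iff _).mpr hb
    set w := hw.unit with hwdef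
    have hwspec : (↑w : Module.End A M) = g + h := hw.unit_spec
    have hu : ¬ IsUnit (g * (↑w⁻¹ : Module.End A M)) := by
      intro hu
      apply hgn
      have hgeq : g = (g * (↑w⁻¹ : Module.End A M)) * ↑w := by
        rw [mul_assoc, Units.inv_mul, mul_one]
      exact (Module.End.isUnit_iff g).mp (hgeq ▸ hu.mul w.isUnit)
    have hnil : IsNilpotent (g * (↑w⁻¹ : Module.End A M)) :=
      aux_nilpotent k hM _ (fun hb' => hu ((Module.End.isUnit_iff _).mpr hb'))
    have h1 : (h : Module.End A M) * ↑w⁻¹ = 1 - g * ↑w⁻¹ := by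
      have h2 : g * (↑w⁻¹ : Module.End A M) + h * ↑w⁻¹ = 1 := by
        rw [← add_mul, ← hwspec, Units.mul_inv]
      linear_combination (norm := noncomm_ring) h2
    apply hhn
    rw [← Module.End.isUnit_iff]
    have h3 : (h : Module.End A M) = (h * ↑w⁻¹) * ↑w := by
      rw [mul_assoc, Units.inv_mul, mul_one]
    rw [h3, h1]
    exact (hnil.isUnit_one_sub).mul w.isUnit
  have hsmulbij : ∀ (c : k) (f : M →ₗ[A] M), c ≠ 0 → Function.Bijective (c • f) →
      Function.Bijective f := by
    intro c f hc hb
    constructor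
    · intro x y hxy
      exact hb.1 (by simp [LinearMap.smul_apply, hxy])
    · intro y
      obtain ⟨x, hx⟩ := hb.2 (c • y)
      refine ⟨x, ?_⟩
      have h2 := congrArg (fun z => c⁻¹ • z) hx
      simpa [smul_smul, inv_mul_cancel₀ hc] using h2
  have hidbij : ∀ c : k, c ≠ 0 → Function.Bijective ((c • LinearMap.id : M →ₗ[A] M)) := by
    intro c hc
    constructor
    · intro x y hxy
      simp only [LinearMap.smul_apply, LinearMap.id_apply] at hxy
      have h2 := congrArg (fun z => c⁻¹ • z) hxy
      simpa [smul_smul, inv_mul_cancel₀ hc] using h2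
    · intro y
      exact ⟨c⁻¹ • y, by simp [smul_smul, mul_inv_cancel₀ hc]⟩
  set N : Submodule k (M →ₗ[A] M) :=
    { carrier := {g | ¬ Function.Bijective g}
      zero_mem' := hzero
      add_mem' := fun {g} {h} hg hh => hadd g h hg hh
      smul_mem' := by
        intro c g hg
        by_cases hc : c = 0
        · simpa [hc] using hzero
        · exact fun hb => hg (hsmulbij c g hc hb) } with hN
  have hNmem : ∀ g : M →ₗ[A] M, g ∈ N ↔ ¬ Function.Bijective g := fun g => Iff.rfl
  have hidne : (LinearMap.id : M →ₗ[A] M) ≠ 0 := by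
    obtain ⟨x, hx⟩ := exists_ne (0 : M)
    intro h
    apply hx
    have := LinearMap.congr_fun h x
    simpa using this
  have heig : ∀ g : M →ₗ[A] M, ∃ c : k, ¬ Function.Bijective (g - (c • LinearMap.id : M →ₗ[A] M)) := by
    intro g
    obtain ⟨c, hc⟩ := Module.End.exists_eigenvalue (g.restrictScalars k)
    obtain ⟨x, hx⟩ := hc.exists_hasEigenvector
    refine ⟨c, fun hb => hx.right (hb.1 (a₂ := 0) ?_)⟩
    have h2 : g x = c • x := hx.apply_eq_smul
    simp [LinearMap.sub_apply, h2]
  have hcompl : IsCompl (k ∙ (LinearMap.id : M →ₗ[A] M)) N := by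
    constructor
    · rw [disjoint_iff, Submodule.eq_bot_iff]
      rintro f ⟨hf1, hf2⟩
      obtain ⟨c, rfl⟩ := Submodule.mem_span_singleton.mp hf1
      by_cases hc : c = 0
      · simp [hc]
      · exact absurd (hidbij c hc) ((hNmem _).mp hf2)
    · rw [codisjoint_iff, Submodule.eq_top_iff']
      intro g
      obtain ⟨c, hc⟩ := heig g
      have hdecomp : g = (c • LinearMap.id : M →ₗ[A] M) + (g - (c • LinearMap.id : M →ₗ[A] M)) := by abel
      rw [hdecomp]
      exact Submodule.add_mem_sup
        (Submodule.mem_span_singleton.mpr ⟨c, rfl⟩) ((hNmem _).mpr hc)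
  have hfr := Submodule.finrank_add_eq_of_isCompl hcompl
  rw [finrank_span_singleton hidne] at hfr
  exact ⟨N, hNmem, by omega⟩

open Classical in
/-- Let `A` be a finite-dimensional algebra over an algebraically closed
field `k`, `Vj` an indecomposable non-projective module with Auslander–Reiten sequence
`0 → τVj → Mj → Vj → 0` (encoded by `ι`, `π`: exact, non-split, with `Vj`, `τVj`
indecomposable, `π` minimal right almost split).  With
`X_j = [τVj] + [Vj] − [Mj] ∈ G(A)` and `([U],[W]) = dim_k Hom_A(U,W)`, we have
`([Vi], X_j) = δ_{ij}` for every indecomposable module `Vi`: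
`dim Hom(Vi, τVj) + dim Hom(Vi, Vj) − dim Hom(Vi, Mj) = 1` if `Vi ≅ Vj` and `0`
otherwise. -/
theorem stmt_18 (k : Type) [Field k] [IsAlgClosed k]
    (A : Type) [Ring A] [Algebra k A] [FiniteDimensional k A]
    (τVj Mj Vj Vi : Type)
    [AddCommGroup τVj] [Module A τVj] [Module k τVj] [SMulCommClass A k τVj]
      [IsScalarTower k A τVj] [FiniteDimensional k τVj]
    [AddCommGroup Mj] [Module A Mj] [Module k Mj] [SMulCommClass A k Mj]
      [IsScalarTower k A Mj] [FiniteDimensional k Mj]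
    [AddCommGroup Vj] [Module A Vj] [Module k Vj] [SMulCommClass A k Vj]
      [IsScalarTower k A Vj] [FiniteDimensional k Vj]
    [AddCommGroup Vi] [Module A Vi] [Module k Vi] [SMulCommClass A k Vi]
      [IsScalarTower k A Vi] [FiniteDimensional k Vi]
    (hVj : Indec A Vj) (hτVj : Indec A τVj) (hVi : Indec A Vi)
    (ι : τVj →ₗ[A] Mj) (π : Mj →ₗ[A] Vj)
    (hι : Function.Injective ι) (hπ : Function.Surjective π)
    (hex : LinearMap.ker π = LinearMap.range ι)
    (hnonsplit : ¬∃ s : Vj →ₗ[A] Mj, π.comp s = LinearMap.id)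
    (hras : ∀ (W : Type) [AddCommGroup W] [Module A W] (f : W →ₗ[A] Vj),
      (¬∃ s : Vj →ₗ[A] W, f.comp s = LinearMap.id) → ∃ u : W →ₗ[A] Mj, π.comp u = f) :
    (Module.finrank k (Vi →ₗ[A] τVj) : ℤ) + (Module.finrank k (Vi →ₗ[A] Vj) : ℤ)
        - (Module.finrank k (Vi →ₗ[A] Mj) : ℤ)
      = if Nonempty (Vi ≃ₗ[A] Vj) then 1 else 0 := by
  have hVjnt : Nontrivial Vj := not_subsingleton_iff_nontrivial.mp hVj.1
  -- the post-composition maps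
  set Φ : (Vi →ₗ[A] Mj) →ₗ[k] (Vi →ₗ[A] Vj) :=
    { toFun := fun u => π ∘ₗ u
      map_add' := fun u v => by ext x; simp
      map_smul' := fun c u => by ext x; simp } with hΦ
  set Ψ : (Vi →ₗ[A] τVj) →ₗ[k] (Vi →ₗ[A] Mj) :=
    { toFun := fun v => ι ∘ₗ v
      map_add' := fun u v => by ext x; simp
      map_smul' := fun c u => by ext x; simp } with hΨ
  have hΨinj : Function.Injective Ψ := by
    intro u v h
    ext x
    apply hι
    have := LinearMap.congr_fun h x
    simpa [hΨ] using this
  have hrangeΨ : LinearMap.range Ψ = LinearMap.ker Φ := by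
    ext u
    constructor
    · rintro ⟨v, rfl⟩
      rw [LinearMap.mem_ker]
      ext x
      have h1 : ι (v x) ∈ LinearMap.ker π := by
        rw [hex]; exact LinearMap.mem_range_self _ _
      simpa [hΦ, hΨ] using h1
    · intro hu
      rw [LinearMap.mem_ker] at hu
      have hux : ∀ x : Vi, u x ∈ LinearMap.range ι := by
        intro x
        rw [← hex, LinearMap.mem_ker]
        have := LinearMap.congr_fun hu x
        simpa [hΦ] using this
      refine ⟨(LinearEquiv.ofInjective ι hι).symm.toLinearMap ∘ₗ
        (u.codRestrict (LinearMap.range ι) hux), ?_⟩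
      ext x
      have h2 := (LinearEquiv.ofInjective ι hι).apply_symm_apply ⟨u x, hux x⟩
      have h3 := congrArg (Subtype.val) h2
      simpa [hΨ, LinearEquiv.ofInjective_apply] using h3
  have hkerΦ : Module.finrank k (LinearMap.ker Φ) = Module.finrank k (Vi →ₗ[A] τVj) := by
    rw [← hrangeΨ]
    exact LinearMap.finrank_range_of_inj hΨinj
  have hrn := LinearMap.finrank_range_add_finrank_ker Φ
  by_cases hiso : Nonempty (Vi ≃ₗ[A] Vj)
  · -- isomorphic case
    rw [if_pos hiso]
    obtain ⟨e⟩ := hiso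
    set ψ : (Vi →ₗ[A] Vj) ≃ₗ[k] (Vj →ₗ[A] Vj) :=
      { toFun := fun f => f ∘ₗ (e.symm.toLinearMap)
        invFun := fun g => g ∘ₗ (e.toLinearMap)
        map_add' := fun f g => by ext x; simp
        map_smul' := fun c f => by ext x; simp
        left_inv := fun f => by ext x; simp
        right_inv := fun g => by ext x; simp } with hψ
    obtain ⟨N, hNmem, hNrank⟩ := aux_local k hVj
    have hmap : Submodule.map (ψ.toLinearMap) (LinearMap.range Φ) = N := by
      ext g
      rw [Submodule.mem_map]
      constructor
      · rintro ⟨f, ⟨u, rfl⟩, rfl⟩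
        rw [hNmem]
        intro hb
        apply hnonsplit
        set q := LinearEquiv.ofBijective (ψ (Φ u)) hb with hq
        refine ⟨(u ∘ₗ e.symm.toLinearMap) ∘ₗ q.symm.toLinearMap, ?_⟩
        ext y
        have h1 : q (q.symm y) = y := q.apply_symm_apply y
        simp only [LinearMap.comp_apply, LinearMap.id_apply]
        exact h1
      · intro hg
        rw [hNmem] at hg
        have hf : ¬∃ s : Vj →ₗ[A] Vi, (g ∘ₗ e.toLinearMap).comp s = LinearMap.id := by
          rintro ⟨s, hs⟩
          apply hg
          have hsurj : Function.Surjective g := by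
            intro y
            refine ⟨e (s y), ?_⟩
            have := LinearMap.congr_fun hs y
            simpa using this
          have hinj : Function.Injective g := by
            have h4 : Function.Surjective (g.restrictScalars k) := hsurj
            exact LinearMap.injective_iff_surjective.mpr h4
          exact ⟨hinj, hsurj⟩
        obtain ⟨u, hu⟩ := hras Vi (g ∘ₗ e.toLinearMap) hf
        refine ⟨Φ u, LinearMap.mem_range_self _ _, ?_⟩
        ext y
        have := LinearMap.congr_fun hu (e.symm y)
        simpa [hψ, hΦ] using this
    have h1 : Module.finrank k (LinearMap.range Φ) = Module.finrank k N := by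
      rw [← hmap, LinearEquiv.finrank_map_eq]
    have h2 : Module.finrank k (Vi →ₗ[A] Vj) = Module.finrank k (Vj →ₗ[A] Vj) :=
      ψ.finrank_eq
    omega
  · -- non-isomorphic case
    rw [if_neg hiso]
    have hnos : ∀ f : Vi →ₗ[A] Vj, ¬∃ s : Vj →ₗ[A] Vi, f.comp s = LinearMap.id := by
      rintro f ⟨s, hs⟩
      have hfs : ∀ y, f (s y) = y := by
        intro y
        have := LinearMap.congr_fun hs y
        simpa using this
      set p : Vi →ₗ[A] Vi := s ∘ₗ f with hp
      have hpp : ∀ x, p (p x) = p x := fun x => by simp [hp, hfs]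
      have hcompl : IsCompl (LinearMap.ker p) (LinearMap.range p) := by
        constructor
        · rw [disjoint_iff, Submodule.eq_bot_iff]
          rintro x ⟨hx1, hx2⟩
          obtain ⟨y, rfl⟩ := hx2
          have hx1' : p (p y) = 0 := hx1
          rw [← hpp y]
          exact hx1'
        · rw [codisjoint_iff, Submodule.eq_top_iff']
          intro x
          refine Submodule.mem_sup.mpr ⟨x - p x, ?_, p x, LinearMap.mem_range_self _ _, by abel⟩
          rw [LinearMap.mem_ker, map_sub, hpp, sub_self]
      rcases hVi.2 _ _ hcompl with hk | hr
      · apply hiso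
        have hinjf : Function.Injective f := by
          intro x y hxy
          have hxy2 : x - y ∈ LinearMap.ker p := by
            rw [LinearMap.mem_ker, hp, LinearMap.comp_apply, map_sub, hxy, sub_self, map_zero]
          rw [hk] at hxy2
          simpa [sub_eq_zero] using hxy2
        exact ⟨LinearEquiv.ofBijective f ⟨hinjf, fun y => ⟨s y, hfs y⟩⟩⟩
      · have hps : ∀ x, p x = 0 := by
          intro x
          have h5 : p x ∈ LinearMap.range p := LinearMap.mem_range_self _ _
          rw [hr] at h5
          simpa using h5
        apply hVj.1
        have hy : ∀ y : Vj, y = 0 := by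
          intro y
          have h6 : s y = 0 := by
            have h7 := hps (s y)
            rw [hp, LinearMap.comp_apply, hfs] at h7
            exact h7
          rw [← hfs y, h6, map_zero]
        exact ⟨fun a b => by rw [hy a, hy b]⟩
    have htop : LinearMap.range Φ = ⊤ := by
      rw [LinearMap.range_eq_top]
      intro f
      obtain ⟨u, hu⟩ := hras Vi f (hnos f)
      exact ⟨u, hu⟩
    have h1 : Module.finrank k (LinearMap.range Φ) = Module.finrank k (Vi →ₗ[A] Vj) := by
      rw [htop]
      exact finrank_top k _
    omega
end
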